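/- Let k ≥ 1, let S_1, …, S_k be strings over an alphabet Σ, let c be a symbol not in Σ, and let x ≥ 0 be an integer. Then LCS(S_1 · c^x, S_2 · c^x, …, S_k · c^x) = x + LCS(S_1, …, S_k). -/

import Mathlib

/-- The length of a longest common subsequence of a family of strings. -/
noncomputable def lcsLen {α : Type*} (L : List (List α)) : ℕ :=
  sSup { m : ℕ | ∃ T : List α, T.length = m ∧ ∀ s ∈ L, T.Sublist s }

/-!
A common subsequence `T` of the strings `Sᵢ · c^x` splits into its letters different from `c`
and its copies of `c`. Since `c` does not occur in any `Sᵢ`, filtering out `c` maps each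
`Sᵢ · c^x` back to `Sᵢ`, so the first part is a common subsequence of the `Sᵢ`; and the second
part has at most `x` letters, the number of `c`'s in any `Sᵢ · c^x`. Hence
`|T| ≤ LCS(S₁, …, S_k) + x`. Conversely, appending `c^x` to a longest common subsequence of the
`Sᵢ` gives a common subsequence of the `Sᵢ · c^x`.
-/

namespace List

variable {α : Type*} [DecidableEq α]

theorem length_eq_length_filter_ne_add_count (l : List α) (c : α) :
    l.length = (l.filter (· ≠ c)).length + l.count c := by
  rw [length_eq_countP_add_countP (· == c), count_eq_countP, countP_eq_length_filter,
    countP_eq_length_filter, Nat.add_comm]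
  simp

variable {s T : List α} {c : α} {x : ℕ}

theorem Sublist.filter_ne_sublist_of_append_replicate (hc : c ∉ s)
    (h : T <+ s ++ replicate x c) : T.filter (· ≠ c) <+ s := by
  have hs : s.filter (· ≠ c) = s := filter_eq_self.2 fun a ha => by
    simp only [ne_eq, decide_eq_true_eq]
    rintro rfl
    exact hc ha
  have := h.filter (· ≠ c)
  rwa [filter_append, hs, filter_replicate_of_neg (by simp), append_nil] at this

theorem Sublist.count_le_of_append_replicate (hc : c ∉ s)
    (h : T <+ s ++ replicate x c) : T.count c ≤ x := by
  simpa [count_eq_zero.2 hc] using h.count_le c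

end List

section lcsLen

open List

variable {α : Type*} {L : List (List α)}

theorem nonempty_commonSublist_lengths :
    {m : ℕ | ∃ T : List α, T.length = m ∧ ∀ s ∈ L, T <+ s}.Nonempty :=
  ⟨0, [], rfl, fun s _ => nil_sublist s⟩

theorem lcsLen_le {n : ℕ} (h : ∀ T : List α, (∀ s ∈ L, T <+ s) → T.length ≤ n) :
    lcsLen L ≤ n :=
  csSup_le nonempty_commonSublist_lengths fun _ ⟨T, hlen, hT⟩ => hlen ▸ h T hT

theorem bddAbove_commonSublist_lengths (hL : L ≠ []) :
    BddAbove {m : ℕ | ∃ T : List α, T.length = m ∧ ∀ s ∈ L, T <+ s} := by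
  obtain ⟨s, hs⟩ := exists_mem_of_ne_nil L hL
  exact ⟨s.length, fun _ ⟨T, hlen, hT⟩ => hlen ▸ (hT s hs).length_le⟩

theorem length_le_lcsLen (hL : L ≠ []) {T : List α} (hT : ∀ s ∈ L, T <+ s) :
    T.length ≤ lcsLen L :=
  le_csSup (bddAbove_commonSublist_lengths hL) ⟨T, rfl, hT⟩

theorem exists_length_eq_lcsLen (hL : L ≠ []) :
    ∃ T : List α, T.length = lcsLen L ∧ ∀ s ∈ L, T <+ s :=
  Nat.sSup_mem nonempty_commonSublist_lengths (bddAbove_commonSublist_lengths hL)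

theorem lcsLen_map_append_replicate [DecidableEq α] (hL : L ≠ []) {c : α}
    (hc : ∀ s ∈ L, c ∉ s) (x : ℕ) :
    lcsLen (L.map (· ++ replicate x c)) = x + lcsLen L := by
  apply le_antisymm
  · refine lcsLen_le fun T hT => ?_
    have hT' : ∀ s ∈ L, T <+ s ++ replicate x c := fun s hs => hT _ (mem_map_of_mem hs)
    obtain ⟨s, hs⟩ := exists_mem_of_ne_nil L hL
    calc T.length = (T.filter (· ≠ c)).length + T.count c :=
          length_eq_length_filter_ne_add_count T c
      _ ≤ lcsLen L + x :=
          Nat.add_le_add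
            (length_le_lcsLen hL fun s hs =>
              (hT' s hs).filter_ne_sublist_of_append_replicate (hc s hs))
            ((hT' s hs).count_le_of_append_replicate (hc s hs))
      _ = x + lcsLen L := Nat.add_comm _ _
  · obtain ⟨T, hlen, hT⟩ := exists_length_eq_lcsLen hL
    calc x + lcsLen L = (T ++ replicate x c).length := by simp [hlen, Nat.add_comm]
      _ ≤ _ := length_le_lcsLen (by simpa using hL) <| forall_mem_map.2 fun s hs =>
          (hT s hs).append (Sublist.refl _)

end lcsLen

/-- For `k ≥ 1` strings `S₁, …, S_k` over `Σ`, a symbol `c ∉ Σ`, and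
`x ≥ 0`: `LCS(S₁·c^x, …, S_k·c^x) = x + LCS(S₁, …, S_k)`. -/
theorem lcs_append_fresh_block
    {β : Type*} (k : ℕ) (hk : 1 ≤ k)
    (Sig : Set β) (S : Fin k → List β) (hS : ∀ i, ∀ ch ∈ S i, ch ∈ Sig)
    (c : β) (hc : c ∉ Sig) (x : ℕ) :
    lcsLen (List.ofFn fun i => S i ++ List.replicate x c) =
      x + lcsLen (List.ofFn S) := by
  classical
  have hne : List.ofFn S ≠ [] := by
    rw [Ne, List.ofFn_eq_nil_iff]
    omega
  have hfresh : ∀ s ∈ List.ofFn S, c ∉ s :=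
    List.forall_mem_ofFn_iff.2 fun i hci => hc (hS i c hci)
  rw [← lcsLen_map_append_replicate hne hfresh x, List.map_ofFn]
  rfl
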